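/- Let w = (uav')^k u, where u, v' ∈ Σ*, a ∈ Σ, k ≥ 1 and uav' is a Lyndon word. Then wa ∈ P' \ L, i.e., wa belongs to P' but is not a Lyndon word. -/

import Mathlib

/-!
The word `u ++ [a]` is both a prefix (as a prefix of `x = u ++ a :: v'`) and a suffix of
`x^k ++ u ++ [a]`, and a Lyndon word has no nonempty border, so `wa` is not Lyndon.
For membership in `P'`, let `c` be the first letter of `x`. If some letter `M` exceeds `c`, then
`x ++ [M]` is Lyndon and has the proper Lyndon prefix `x`, so `x^k ++ (x ++ [M]) = wa ++ v' ++ [M]`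
is Lyndon by repeatedly concatenating the smaller Lyndon word `x` in front. Otherwise `c` is the
maximal letter, which forces `x = [c]`, and then `wa = c^(k+1)`.
-/

variable {α : Type*}

/-- The rotation `rot(w,i) = w[i..|w|-1] w[0..i-1]`. -/
def rot (w : List α) (i : ℕ) : List α := w.drop i ++ w.take i

/-- A Lyndon word: a nonempty word strictly smaller than all of its proper rotations. -/
def IsLyndon [LinearOrder α] (w : List α) : Prop :=
  w ≠ [] ∧ ∀ i, 0 < i → i < w.length → w < rot w i

/-- `IsCFL w f` : `f` is the Chen–Fox–Lyndon factorization of `w`, i.e. a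
nonincreasing sequence of Lyndon words whose concatenation is `w`. -/
def IsCFL [LinearOrder α] (w : List α) (f : List (List α)) : Prop :=
  f.flatten = w ∧ (∀ x ∈ f, IsLyndon x) ∧ f.Chain' (· ≥ ·)

/-- `u^k` : the `k`-fold concatenation of the word `u`. -/
def listPow (u : List α) (k : ℕ) : List α := (List.replicate k u).flatten

/-- `P`: the set of nonempty prefixes of Lyndon words. -/
def InP [LinearOrder α] (w : List α) : Prop :=
  w ≠ [] ∧ ∃ u : List α, IsLyndon (w ++ u)

/-- `P' = P ∪ { c^k : k ≥ 2 }` where `c` is the maximum symbol of the alphabet. -/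
def InP' [LinearOrder α] (w : List α) : Prop :=
  InP w ∨ ∃ (c : α) (k : ℕ), 2 ≤ k ∧ (∀ a : α, a ≤ c) ∧ w = List.replicate k c

/-- A border of `w`: a proper prefix of `w` that is also a suffix of `w`. -/
def IsBorder (b w : List α) : Prop := b <+: w ∧ b <:+ w ∧ b.length < w.length

/-- The length of the longest common prefix of two words. -/
def lcpLen [DecidableEq α] : List α → List α → ℕ
  | a :: u, b :: v => if a = b then lcpLen u v + 1 else 0
  | _, _ => 0

namespace List

variable [LinearOrder α]

theorem append_lt_append_of_lt_of_not_prefix :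
    ∀ {u v : List α}, u < v → ¬ u <+: v → ∀ p q : List α, u ++ p < v ++ q
  | [], _, _, hp, _, _ => absurd (nil_prefix) hp
  | _ :: _, [], h, _, _, _ => absurd h (not_lt_nil _)
  | a :: u, b :: v, h, hp, p, q => by
    rcases cons_lt_cons_iff.mp h with hab | ⟨rfl, huv⟩
    · exact cons_lt_cons_iff.mpr (.inl hab)
    · have hp' : ¬ u <+: v := fun h => hp (cons_prefix_cons.mpr ⟨rfl, h⟩)
      exact cons_lt_cons_iff.mpr (.inr ⟨rfl, append_lt_append_of_lt_of_not_prefix huv hp' p q⟩)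

theorem IsPrefix.lex_le {l₁ l₂ : List α} (h : l₁ <+: l₂) : l₁ ≤ l₂ :=
  not_lt.mp h.le

end List

open List

theorem listPow_succ (x : List α) (k : ℕ) : listPow x (k + 1) = x ++ listPow x k := by
  simp [listPow, replicate_succ]

theorem length_listPow (x : List α) (k : ℕ) : (listPow x k).length = k * x.length := by
  simp [listPow]

theorem prefix_listPow_append {x y : List α} (hxy : x <+: y) :
    ∀ k, x <+: listPow x k ++ y
  | 0 => by simpa [listPow] using hxy
  | k + 1 => by rw [listPow_succ, append_assoc]; exact prefix_append _ _

theorem isBorder_listPow_append {x p : List α} (hx : x ≠ []) (hp : p <+: x) {k : ℕ}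
    (hk : k ≠ 0) : IsBorder p (listPow x k ++ p) := by
  obtain ⟨m, rfl⟩ := Nat.exists_eq_succ_of_ne_zero hk
  rw [listPow_succ, append_assoc]
  refine ⟨hp.trans (prefix_append _ _), (suffix_append _ _).trans (suffix_append _ _), ?_⟩
  have := length_pos_iff.mpr hx
  simp only [length_append, length_listPow]
  omega

section Lyndon

variable [LinearOrder α]

theorem IsBorder.not_isLyndon {b w : List α} (hb : IsBorder b w) (hb0 : b ≠ []) :
    ¬ IsLyndon w := by
  -- `w = b ++ s = t ++ b`: the rotation `b ++ t` gives `s < t`, hence `s ++ b < t ++ b = w`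
  -- as `|s| = |t|`, contradicting the rotation `s ++ b`.
  obtain ⟨⟨s, rfl⟩, ⟨t, hw⟩, hlen⟩ := hb
  intro hL
  have hst : s.length = t.length := by have := congrArg length hw; simp only [length_append] at this; omega
  have hb0 := length_pos_iff.mpr hb0
  have hs0 : 0 < s.length := by simpa using hlen
  have hbt : b ++ s < b ++ t := by
    simpa [rot, ← hw] using hL.2 t.length (by omega) (by simp [← hst, hb0])
  have hsb : b ++ s < s ++ b := by
    simpa [rot] using hL.2 b.length hb0 (by simpa using hlen)
  have hlt : s < t := by
    by_contra! hts
    rcases hts.lt_or_eq with hts | rfl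
    · exact (append_left_lt hts).asymm hbt
    · exact hbt.false
  have hpre : ¬ s <+: t := fun h => hlt.ne (h.eq_of_length hst)
  have := append_lt_append_of_lt_of_not_prefix hlt hpre b b
  rw [hw] at this
  exact (hsb.trans this).false

theorem IsLyndon.lt_drop {w : List α} (hw : IsLyndon w) {i : ℕ} (hi : 0 < i)
    (hiw : i < w.length) : w < w.drop i := by
  by_contra! hle
  by_cases hpre : w.drop i <+: w
  · exact IsBorder.not_isLyndon ⟨hpre, drop_suffix i w, by rw [length_drop]; omega⟩
      (by rw [ne_eq, drop_eq_nil_iff]; omega) hw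
  · have hlt : w.drop i < w := lt_of_le_of_ne hle fun h => hpre (by rw [h])
    have := append_lt_append_of_lt_of_not_prefix hlt hpre (w.take i) []
    rw [append_nil] at this
    exact (hw.2 i hi hiw).not_gt this

theorem isLyndon_iff_lt_drop {w : List α} :
    IsLyndon w ↔ w ≠ [] ∧ ∀ i, 0 < i → i < w.length → w < w.drop i :=
  ⟨fun hw => ⟨hw.1, fun _ => hw.lt_drop⟩,
    fun h => ⟨h.1, fun i hi hiw => (h.2 i hi hiw).trans_le (prefix_append _ _).lex_le⟩⟩

theorem isLyndon_singleton (c : α) : IsLyndon [c] :=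
  ⟨cons_ne_nil c [], fun i hi hlen => by rw [length_singleton] at hlen; omega⟩

theorem IsLyndon.append_lt_drop {x y : List α} (hx : x ≠ []) (hy : IsLyndon y) (hxy : x < y)
    {j : ℕ} (hyj : y ≤ y.drop j) : x ++ y < y.drop j := by
  by_cases hpre : x <+: y.drop j
  · obtain ⟨r, hr⟩ := hpre
    have hr' : y.drop (j + x.length) = r := by rw [← drop_drop, ← hr, drop_left]
    have hr0 : r ≠ [] := by
      rintro rfl
      rw [append_nil] at hr
      exact (hxy.trans_le (hr ▸ hyj)).false
    have hlen : j + x.length < y.length := by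
      have := congrArg length hr'
      simp only [length_drop] at this
      have := length_pos_iff.mpr hr0
      omega
    rw [← hr]
    exact append_left_lt (hr' ▸ hy.lt_drop (by simp [length_pos_iff.mpr hx]) hlen)
  · simpa using append_lt_append_of_lt_of_not_prefix (hxy.trans_le hyj) hpre y []

theorem IsLyndon.append {x y : List α} (hx : IsLyndon x) (hy : IsLyndon y) (hxy : x < y) :
    IsLyndon (x ++ y) := by
  refine isLyndon_iff_lt_drop.mpr ⟨by simp [hx.1], fun i hi hlen => ?_⟩
  rw [length_append] at hlen
  rcases lt_or_ge i x.length with hix | hix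
  · rw [drop_append_of_le_length hix.le]
    exact append_lt_append_of_lt_of_not_prefix (hx.lt_drop hi hix)
      (mt IsPrefix.length_le (by rw [length_drop]; omega)) y y
  · obtain ⟨j, rfl⟩ := Nat.exists_eq_add_of_le hix
    rw [drop_length_add_append]
    rcases j.eq_zero_or_pos with rfl | hj
    · simpa using hy.append_lt_drop hx.1 hxy (j := 0) le_rfl
    · exact hy.append_lt_drop hx.1 hxy (hy.lt_drop hj (by omega)).le

theorem IsLyndon.append_singleton {w : List α} (hw : IsLyndon w) {M : α}
    (hM : w.head hw.1 < M) : IsLyndon (w ++ [M]) := by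
  obtain ⟨c, t, rfl⟩ := exists_cons_of_ne_nil hw.1
  exact hw.append (isLyndon_singleton M) (cons_lt_cons_iff.mpr (.inl hM))

theorem IsLyndon.length_eq_one_of_forall_le_head {w : List α} (hw : IsLyndon w)
    (hmax : ∀ M, M ≤ w.head hw.1) : w.length = 1 := by
  obtain ⟨c, t, rfl⟩ := exists_cons_of_ne_nil hw.1
  by_contra hlen
  obtain ⟨z, hz⟩ : ∃ z, (c :: t).drop t.length = [z] :=
    length_eq_one_iff.mp (by simp)
  have hlt := hw.lt_drop (i := t.length) (length_pos_iff.mpr (by simpa using hlen)) (by simp)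
  rw [hz] at hlt
  rcases cons_lt_cons_iff.mp hlt with hcz | ⟨-, htnil⟩
  · exact (hmax z).not_gt hcz
  · exact not_lt_nil _ htnil

theorem IsLyndon.listPow_append {x y : List α} (hx : IsLyndon x)
    (hy : IsLyndon y) (hxy : x <+: y) (hne : x ≠ y) : ∀ k, IsLyndon (listPow x k ++ y)
  | 0 => by simpa [listPow] using hy
  | k + 1 => by
    have hlen : x.length < y.length := lt_of_le_of_ne hxy.length_le (mt hxy.eq_of_length hne)
    rw [listPow_succ, append_assoc]
    refine hx.append (hx.listPow_append hy hxy hne k)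
      (lt_of_le_of_ne (prefix_listPow_append hxy k).lex_le ?_)
    intro h
    have := congrArg length h
    simp only [length_append, length_listPow] at this
    omega

end Lyndon

/-- For `w = (uav')^k u` with `uav'` a Lyndon word and `k ≥ 1`:
`wa ∈ P' \\ L`, i.e. `wa` is in `P'` but is not a Lyndon word. -/
theorem ext_equal_P'_not_lyndon [LinearOrder α] (u v' : List α) (a : α) (k : ℕ)
    (hk : 1 ≤ k) (hL : IsLyndon (u ++ a :: v')) :
    InP' (listPow (u ++ a :: v') k ++ u ++ [a]) ∧
      ¬ IsLyndon (listPow (u ++ a :: v') k ++ u ++ [a]) := by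
  refine ⟨?_, ?_⟩
  · by_cases hmax : ∀ M, M ≤ (u ++ a :: v').head hL.1
    · have hlen := hL.length_eq_one_of_forall_le_head hmax
      simp only [length_append, length_cons] at hlen
      obtain ⟨rfl, rfl⟩ : u = [] ∧ v' = [] :=
        ⟨eq_nil_of_length_eq_zero (by omega), eq_nil_of_length_eq_zero (by omega)⟩
      exact .inr ⟨a, k + 1, by omega, by simpa using hmax, by simp [listPow, replicate_succ']⟩
    · push Not at hmax
      obtain ⟨M, hM⟩ := hmax
      refine .inl ⟨by simp, v' ++ [M], ?_⟩
      simpa using hL.listPow_append (hL.append_singleton hM) (prefix_append _ _) (by simp) k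
  · rw [append_assoc]
    exact (isBorder_listPow_append (by simp) ⟨v', by simp⟩ (by omega)).not_isLyndon (by simp)
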